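/- arXiv:2207.10583 — 3 statements merged into one kernel-verified Lean document; each statement's English description precedes it below -/
import Mathlib

section
/- For a, b ∈ (0,1), ρ_lower(a,b) = (max(a+b−1,0) − ab)/√(a(1−a)b(1−b)) equals −1 if and only if a + b = 1. -/
noncomputable def rhoLower (a b : ℝ) : ℝ :=
  (max (a + b - 1) 0 - a * b) / Real.sqrt (a * (1 - a) * b * (1 - b))

noncomputable def rhoUpper (a b : ℝ) : ℝ :=
  (min a b - a * b) / Real.sqrt (a * (1 - a) * b * (1 - b))

noncomputable def lucas (ρ u v : ℝ) : ℝ :=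
  u * v + ρ * Real.sqrt (u * (1 - u) * v * (1 - v))

/-- Piecewise correlated AND operator. -/
noncomputable def Cand (ρ u v : ℝ) : ℝ :=
  if ρ ≤ rhoLower u v then max (u + v - 1) 0
  else if rhoUpper u v ≤ ρ then min u v
  else lucas ρ u v

/-- Clipped form of the correlated AND operator. -/
noncomputable def CandClip (ρ u v : ℝ) : ℝ :=
  min (min u v) (max (max (u + v - 1) 0) (lucas ρ u v))

/-! With `x = a * b` and `y = (1 - a) * (1 - b)` one has `y - x = 1 - a - b`, so the numerator of
`rhoLower a b` is `-min x y` and the denominator is `√(x * y)`. The minimum of two positive numbers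
equals their geometric mean only when they are equal, i.e. when `a + b = 1`. -/

theorem max_add_sub_one_zero_sub_mul (a b : ℝ) :
    max (a + b - 1) 0 - a * b = -min (a * b) ((1 - a) * (1 - b)) := by
  rw [min_comm, ← max_neg_neg, ← max_sub_sub_right, zero_sub]
  congr 1
  ring

theorem min_eq_sqrt_mul_iff {x y : ℝ} (hx : 0 < x) (hy : 0 < y) :
    min x y = √(x * y) ↔ x = y := by
  refine ⟨fun h => ?_, fun h => by rw [h, min_self, Real.sqrt_mul_self hy.le]⟩
  wlog hxy : x ≤ y generalizing x y
  · exact (this hy hx (by rwa [min_comm, mul_comm]) (le_of_not_ge hxy)).symm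
  rw [min_eq_left hxy] at h
  have hsq : x * x = x * y := by
    rw [← Real.mul_self_sqrt (mul_pos hx hy).le, ← h]
  exact mul_left_cancel₀ hx.ne' hsq

theorem rhoLower_eq_neg_min_div_sqrt (a b : ℝ) :
    rhoLower a b = -min (a * b) ((1 - a) * (1 - b)) / √(a * b * ((1 - a) * (1 - b))) := by
  rw [rhoLower, max_add_sub_one_zero_sub_mul]
  congr 2
  ring

theorem stmt_3 (a b : ℝ) (ha : a ∈ Set.Ioo (0:ℝ) 1) (hb : b ∈ Set.Ioo (0:ℝ) 1) :
    rhoLower a b = -1 ↔ a + b = 1 := by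
  obtain ⟨ha0, ha1⟩ := ha
  obtain ⟨hb0, hb1⟩ := hb
  have hx : 0 < a * b := mul_pos ha0 hb0
  have hy : 0 < (1 - a) * (1 - b) := mul_pos (by linarith) (by linarith)
  have hs : √(a * b * ((1 - a) * (1 - b))) ≠ 0 := (Real.sqrt_pos.mpr (mul_pos hx hy)).ne'
  rw [rhoLower_eq_neg_min_div_sqrt, div_eq_iff hs, neg_one_mul, neg_inj, min_eq_sqrt_mul_iff hx hy]
  constructor <;> intro h <;> linarith
end

section
/- The correlated AND operator C_ρ is monotone nondecreasing in each argument: for fixed ρ ∈ [−1,1] and u₁ ≤ u₂, v in (0,1), C_ρ(u₁,v) ≤ C_ρ(u₂,v), and similarly in the second argument. -/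
lemma keyA (ρ u₁ u₂ v : ℝ) (hρ0 : 0 ≤ ρ)
    (h1a : 0 < u₁) (h1b : u₁ < 1) (h2a : 0 < u₂) (h2b : u₂ < 1)
    (hva : 0 < v) (hvb : v < 1) (h12 : u₁ ≤ u₂) :
    min (min u₁ v) (lucas ρ u₁ v) ≤ lucas ρ u₂ v := by
  rcases eq_or_lt_of_le h12 with rfl | h12'
  · exact min_le_right _ _
  unfold lucas
  set A := Real.sqrt (u₁ * (1 - u₁) * v * (1 - v)) with hA
  set B := Real.sqrt (u₂ * (1 - u₂) * v * (1 - v)) with hB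
  have hA0 : 0 ≤ A := Real.sqrt_nonneg _
  have hB0 : 0 ≤ B := Real.sqrt_nonneg _
  have hA2 : A ^ 2 = u₁ * (1 - u₁) * v * (1 - v) := Real.sq_sqrt
    (by apply mul_nonneg (mul_nonneg (mul_nonneg h1a.le (by linarith)) hva.le) (by linarith))
  have hB2 : B ^ 2 = u₂ * (1 - u₂) * v * (1 - v) := Real.sq_sqrt
    (by apply mul_nonneg (mul_nonneg (mul_nonneg h2a.le (by linarith)) hva.le) (by linarith))
  clear_value A B
  clear hA hB
  by_cases hL : u₁ * v + ρ * A ≤ u₂ * v + ρ * B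
  · exact le_trans (min_le_right _ _) hL
  push_neg at hL
  have hBA : B < A := by
    by_contra h
    push_neg at h
    nlinarith [mul_nonneg hρ0 (sub_nonneg.2 h), mul_nonneg (sub_nonneg.2 h12) hva.le]
  have hsum : 1 < u₁ + u₂ := by
    have hsq : B ^ 2 < A ^ 2 := by nlinarith
    nlinarith [mul_pos hva (sub_pos.2 hvb), mul_pos (sub_pos.2 h12') (mul_pos hva (sub_pos.2 hvb))]
  have hAB0 : 0 < A + B := by linarith
  have hd : 0 < ρ * (A - B) - (u₂ - u₁) * v := by nlinarith
  have step1 : ρ * (A ^ 2 - B ^ 2) > (u₂ - u₁) * v * (A + B) := by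
    nlinarith [mul_pos hd hAB0]
  have hpos : 0 < (u₂ - u₁) * v := mul_pos (sub_pos.2 h12') hva
  have step2 : A + B < ρ * (u₁ + u₂ - 1) * (1 - v) := by
    nlinarith [step1, hA2, hB2, hpos]
  have step3 : 2 * B < ρ * (u₁ + u₂ - 1) * (1 - v) := by linarith
  have step4 : 2 * u₂ * (1 - u₂) * v ≤ ρ * B * (u₁ + u₂ - 1) := by
    nlinarith [mul_le_mul_of_nonneg_left step3.le hB0, hB2, sub_pos.2 hvb]
  have hS : 0 < u₁ + u₂ - 1 := by linarith
  have hfin : min u₁ v ≤ u₂ * v + ρ * B := by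
    rcases le_total u₁ v with hc | hc
    · rw [min_eq_left hc]
      have t1 : 0 ≤ (v - u₁) * (u₂ * (1 + u₁ - u₂)) :=
        mul_nonneg (sub_nonneg.2 hc) (mul_nonneg h2a.le (by linarith))
      have t2 : 0 ≤ u₁ * ((1 - u₂) * (1 + u₂ - u₁)) :=
        mul_nonneg h1a.le (mul_nonneg (by linarith) (by linarith))
      have key : 0 ≤ (u₂ * v + ρ * B - u₁) * (u₁ + u₂ - 1) := by
        have hid : (u₂ * v + ρ * B - u₁) * (u₁ + u₂ - 1) =
            (ρ * B * (u₁ + u₂ - 1) - 2 * u₂ * (1 - u₂) * v) +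
            (v - u₁) * (u₂ * (1 + u₁ - u₂)) + u₁ * ((1 - u₂) * (1 + u₂ - u₁)) := by ring
        rw [hid]; linarith
      by_contra hcon
      push_neg at hcon
      exact absurd key (not_le.2 (mul_neg_of_neg_of_pos (by linarith) hS))
    · rw [min_eq_right hc]
      have t1 : 0 ≤ v * ((1 - u₂) * (u₂ - u₁ + 1)) :=
        mul_nonneg hva.le (mul_nonneg (by linarith) (by linarith))
      have key : 0 ≤ (u₂ * v + ρ * B - v) * (u₁ + u₂ - 1) := by
        have hid : (u₂ * v + ρ * B - v) * (u₁ + u₂ - 1) =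
            (ρ * B * (u₁ + u₂ - 1) - 2 * u₂ * (1 - u₂) * v) +
            v * ((1 - u₂) * (u₂ - u₁ + 1)) := by ring
        rw [hid]; linarith
      by_contra hcon
      push_neg at hcon
      exact absurd key (not_le.2 (mul_neg_of_neg_of_pos (by linarith) hS))
  exact le_trans (min_le_left _ _) hfin

lemma lucas_reflect (ρ u v : ℝ) : lucas (-ρ) (1 - u) v = v - lucas ρ u v := by
  unfold lucas
  rw [show (1 - u) * (1 - (1 - u)) * v * (1 - v) = u * (1 - u) * v * (1 - v) by ring]
  ring

lemma keyB (ρ u₁ u₂ v : ℝ) (hρ0 : ρ ≤ 0)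
    (h1a : 0 < u₁) (h1b : u₁ < 1) (h2a : 0 < u₂) (h2b : u₂ < 1)
    (hva : 0 < v) (hvb : v < 1) (h12 : u₁ ≤ u₂) :
    lucas ρ u₁ v ≤ max (max (u₂ + v - 1) 0) (lucas ρ u₂ v) := by
  have h := keyA (-ρ) (1 - u₂) (1 - u₁) v (by linarith) (by linarith) (by linarith)
    (by linarith) (by linarith) hva hvb (by linarith)
  rw [lucas_reflect ρ u₂ v, lucas_reflect ρ u₁ v] at h
  rcases min_le_iff.1 h with h' | h'
  · rcases min_le_iff.1 h' with h'' | h''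
    · exact le_trans (by linarith) (le_trans (le_max_left _ _) (le_max_left _ _))
    · exact le_trans (by linarith) (le_trans (le_max_right _ _) (le_max_left _ _))
  · exact le_trans (by linarith) (le_max_right _ _)

lemma monoU (ρ u₁ u₂ v : ℝ)
    (h1a : 0 < u₁) (h1b : u₁ < 1) (h2a : 0 < u₂) (h2b : u₂ < 1)
    (hva : 0 < v) (hvb : v < 1) (h12 : u₁ ≤ u₂) :
    CandClip ρ u₁ v ≤ CandClip ρ u₂ v := by
  unfold CandClip
  apply le_min
  · exact le_trans (min_le_left _ _) (min_le_min (by linarith) le_rfl)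
  · rcases le_total 0 ρ with hs | hs
    · rcases le_total (lucas ρ u₁ v) (max (u₁ + v - 1) 0) with hc | hc
      · calc min (min u₁ v) (max (max (u₁ + v - 1) 0) (lucas ρ u₁ v))
            ≤ max (max (u₁ + v - 1) 0) (lucas ρ u₁ v) := min_le_right _ _
          _ = max (u₁ + v - 1) 0 := max_eq_left hc
          _ ≤ max (u₂ + v - 1) 0 := max_le_max (by linarith) le_rfl
          _ ≤ _ := le_max_left _ _
      · rw [max_eq_right hc]
        exact le_trans (keyA ρ u₁ u₂ v hs h1a h1b h2a h2b hva hvb h12) (le_max_right _ _)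
    · refine le_trans (min_le_right _ _) (max_le ?_ ?_)
      · exact le_trans (max_le_max (by linarith) le_rfl) (le_max_left _ _)
      · exact keyB ρ u₁ u₂ v hs h1a h1b h2a h2b hva hvb h12

lemma candClip_comm (ρ u v : ℝ) : CandClip ρ u v = CandClip ρ v u := by
  unfold CandClip lucas
  rw [min_comm u v, show u + v - 1 = v + u - 1 by ring,
    show u * (1 - u) * v * (1 - v) = v * (1 - v) * u * (1 - u) by ring, mul_comm u v]

theorem stmt_10 (ρ : ℝ) (hρ : ρ ∈ Set.Icc (-1:ℝ) 1) :
    (∀ u₁ u₂ v : ℝ, u₁ ∈ Set.Ioo (0:ℝ) 1 → u₂ ∈ Set.Ioo (0:ℝ) 1 → v ∈ Set.Ioo (0:ℝ) 1 →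
      u₁ ≤ u₂ → CandClip ρ u₁ v ≤ CandClip ρ u₂ v) ∧
    (∀ u v₁ v₂ : ℝ, u ∈ Set.Ioo (0:ℝ) 1 → v₁ ∈ Set.Ioo (0:ℝ) 1 → v₂ ∈ Set.Ioo (0:ℝ) 1 →
      v₁ ≤ v₂ → CandClip ρ u v₁ ≤ CandClip ρ u v₂) := by
  constructor
  · intro u₁ u₂ v hu₁ hu₂ hv h12
    exact monoU ρ u₁ u₂ v hu₁.1 hu₁.2 hu₂.1 hu₂.2 hv.1 hv.2 h12
  · intro u v₁ v₂ hu hv₁ hv₂ h12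
    rw [candClip_comm ρ u v₁, candClip_comm ρ u v₂]
    exact monoU ρ v₁ v₂ u hv₁.1 hv₁.2 hv₂.1 hv₂.2 hu.1 hu.2 h12
end

section
/- When the correlation is completely unknown, the correlated AND recovers the Fréchet bounds: for a,b ∈ (0,1), the range of C_ρ(a,b) as ρ varies over [−1,1] is exactly the interval [max(a+b−1,0), min(a,b)]. -/
lemma geo_min (x y : ℝ) (hx : 0 ≤ x) (hy : 0 ≤ y) : min x y ≤ Real.sqrt (x * y) := by
  have h0 : 0 ≤ min x y := le_min hx hy
  have : min x y * min x y ≤ x * y :=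
    mul_le_mul (min_le_left _ _) (min_le_right _ _) h0 hx
  calc min x y = Real.sqrt (min x y * min x y) := (Real.sqrt_mul_self h0).symm
    _ ≤ Real.sqrt (x * y) := Real.sqrt_le_sqrt this

theorem stmt_18 (a b : ℝ) (ha : a ∈ Set.Ioo (0:ℝ) 1) (hb : b ∈ Set.Ioo (0:ℝ) 1) :
    (fun ρ => CandClip ρ a b) '' Set.Icc (-1:ℝ) 1 =
      Set.Icc (max (a + b - 1) 0) (min a b) := by
  obtain ⟨ha0, ha1⟩ := ha
  obtain ⟨hb0, hb1⟩ := hb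
  set s : ℝ := Real.sqrt (a * (1 - a) * b * (1 - b)) with hs
  set L : ℝ := max (a + b - 1) 0 with hL
  set U : ℝ := min a b with hU
  have ha0' := ha0.le
  have hb0' := hb0.le
  have ha1' : (0:ℝ) ≤ 1 - a := by linarith
  have hb1' : (0:ℝ) ≤ 1 - b := by linarith
  have hLU : L ≤ U := by
    apply max_le <;> apply le_min <;> linarith
  -- a*b - L ≤ s
  have h1 : a * b - L ≤ s := by
    have key : min (a * b) ((1 - a) * (1 - b)) ≤ s := by
      have := geo_min (a * b) ((1 - a) * (1 - b)) (mul_nonneg ha0' hb0')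
        (mul_nonneg ha1' hb1')
      calc min (a * b) ((1 - a) * (1 - b)) ≤ Real.sqrt (a * b * ((1 - a) * (1 - b))) := this
        _ = s := by rw [hs]; ring_nf
    have h1a : a * b - L ≤ a * b := by
      have : (0:ℝ) ≤ L := le_max_right _ _
      linarith
    have h1b : a * b - L ≤ (1 - a) * (1 - b) := by
      have : a + b - 1 ≤ L := le_max_left _ _
      nlinarith
    calc a * b - L ≤ min (a * b) ((1 - a) * (1 - b)) := le_min h1a h1b
      _ ≤ s := key
  -- U ≤ a*b + s
  have h2 : U ≤ a * b + s := by
    have key : min (a * (1 - b)) (b * (1 - a)) ≤ s := by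
      have := geo_min (a * (1 - b)) (b * (1 - a)) (mul_nonneg ha0' hb1')
        (mul_nonneg hb0' ha1')
      calc min (a * (1 - b)) (b * (1 - a)) ≤ Real.sqrt (a * (1 - b) * (b * (1 - a))) := this
        _ = s := by rw [hs]; ring_nf
    have h2a : U - a * b ≤ a * (1 - b) := by
      have : U ≤ a := min_le_left _ _
      nlinarith
    have h2b : U - a * b ≤ b * (1 - a) := by
      have : U ≤ b := min_le_right _ _
      nlinarith
    have : U - a * b ≤ s := le_trans (le_min h2a h2b) key
    linarith
  have hfdef : ∀ ρ : ℝ, CandClip ρ a b = min U (max L (a * b + ρ * s)) := by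
    intro ρ; rfl
  have hcont : Continuous fun ρ : ℝ => CandClip ρ a b := by
    simp only [hfdef]
    exact continuous_const.min ((continuous_const.max (by fun_prop)))
  have hfneg : CandClip (-1) a b = L := by
    rw [hfdef]
    have : a * b + (-1) * s ≤ L := by linarith
    rw [max_eq_left this, min_eq_right hLU]
  have hfpos : CandClip 1 a b = U := by
    rw [hfdef]
    have : U ≤ max L (a * b + 1 * s) := le_trans (by linarith) (le_max_right _ _)
    rw [min_eq_left this]
  apply subset_antisymm
  · rintro y ⟨ρ, _, rfl⟩
    constructor
    · simp only [hfdef]; exact le_min hLU (le_max_left _ _)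
    · simp only [hfdef]; exact min_le_left _ _
  · have := intermediate_value_Icc (by norm_num : (-1:ℝ) ≤ 1) hcont.continuousOn
    rw [hfneg, hfpos] at this
    exact this
end
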